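/- arXiv:2603.05196 — 7 statements merged into one kernel-verified Lean document; each statement's English description precedes it below -/
import Mathlib

section
/- Let X ⊆ ℝ^m be nonempty and closed, L ∈ (0,1), L₁ ≥ 0, and let Ψ : ℝ^m × ℝⁿ → ℝⁿ be such that for every x ∈ ℝ^m the map Ψ(x,·) is L-Lipschitz on ℝⁿ, and for every y ∈ ℝⁿ the map Ψ(·,y) is L₁-Lipschitz on ℝ^m. Then for every (x,y) ∈ ℝ^m × ℝⁿ and every (z₁, z₂) ∈ ℝ^m × ℝⁿ, there exists (x̄, ȳ) ∈ ℝ^m × ℝⁿ with x̄ − z₁ ∈ X and ȳ = Ψ(x̄, ȳ) + z₂ such that ‖x − x̄‖ + ‖y − ȳ‖ ≤ (1 + L₁/(1 − L))·dist(x − z₁, X) + (1/(1 − L))·‖y − Ψ(x,y) − z₂‖. (This is the key estimate establishing that the set-valued constraint mapping H(x,y) = (x, y − Ψ(x,y)) − (X × {0}) is metrically regular around every point of its graph.) -/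
/-- The key estimate for metric regularity of the constraint mapping
`H(x,y) = (x, y - Ψ(x,y)) - (X × {0})`: for every `(x,y)` and perturbation `(z₁,z₂)` there
is a point `(x̄,ȳ)` in `H⁻¹(z)` whose distance to `(x,y)` is controlled by
`dist(x - z₁, X)` and `‖y - Ψ(x,y) - z₂‖`. -/
theorem stmt_6 {m n : ℕ}
    (X : Set (EuclideanSpace ℝ (Fin m))) (hXne : X.Nonempty) (hXcl : IsClosed X)
    (L L₁ : ℝ) (hL0 : 0 < L) (hL1 : L < 1) (hL₁ : 0 ≤ L₁)
    (Ψ : EuclideanSpace ℝ (Fin m) → EuclideanSpace ℝ (Fin n) → EuclideanSpace ℝ (Fin n))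
    (hLipy : ∀ x : EuclideanSpace ℝ (Fin m), ∀ y y' : EuclideanSpace ℝ (Fin n),
      ‖Ψ x y - Ψ x y'‖ ≤ L * ‖y - y'‖)
    (hLipx : ∀ y : EuclideanSpace ℝ (Fin n), ∀ x x' : EuclideanSpace ℝ (Fin m),
      ‖Ψ x y - Ψ x' y‖ ≤ L₁ * ‖x - x'‖) :
    ∀ (x z₁ : EuclideanSpace ℝ (Fin m)) (y z₂ : EuclideanSpace ℝ (Fin n)),
      ∃ (xb : EuclideanSpace ℝ (Fin m)) (yb : EuclideanSpace ℝ (Fin n)),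
        xb - z₁ ∈ X ∧ yb = Ψ xb yb + z₂ ∧
        ‖x - xb‖ + ‖y - yb‖ ≤
          (1 + L₁ / (1 - L)) * Metric.infDist (x - z₁) X
            + (1 / (1 - L)) * ‖y - Ψ x y - z₂‖ := by
  intro x z₁ y z₂
  have h1L : (0:ℝ) < 1 - L := by linarith
  -- nearest point
  obtain ⟨w, hwX, hwd⟩ := hXcl.exists_infDist_eq_dist hXne (x - z₁)
  set xb := w + z₁ with hxb
  have hxbX : xb - z₁ ∈ X := by simpa [hxb] using hwX
  have hdist : ‖x - xb‖ = Metric.infDist (x - z₁) X := by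
    rw [hwd, dist_eq_norm, hxb]
    congr 1
    abel
  -- contraction
  set f : EuclideanSpace ℝ (Fin n) → EuclideanSpace ℝ (Fin n) := fun v => Ψ xb v + z₂ with hf
  have hlip : LipschitzWith L.toNNReal f := by
    apply LipschitzWith.of_dist_le_mul
    intro a b
    have h1 : dist (f a) (f b) = ‖Ψ xb a - Ψ xb b‖ := by
      rw [dist_eq_norm]; simp only [hf]; congr 1; abel
    rw [h1, Real.coe_toNNReal _ hL0.le, dist_eq_norm]
    exact hLipy xb a b
  have hcontr : ContractingWith L.toNNReal f := by
    constructor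
    · exact_mod_cast (Real.toNNReal_lt_one).mpr hL1
    · exact hlip
  obtain ⟨yb, hyb⟩ := hcontr.exists_fixedPoint y (by simp [edist_dist])
  have hfix : yb = Ψ xb yb + z₂ := (hyb.1).symm
  refine ⟨xb, yb, hxbX, hfix, ?_⟩
  -- bound ‖y - yb‖
  have key : (1 - L) * ‖y - yb‖ ≤ ‖y - Ψ xb y - z₂‖ := by
    have h2 : ‖y - yb‖ ≤ ‖y - (Ψ xb y + z₂)‖ + ‖Ψ xb y - Ψ xb yb‖ := by
      have : y - yb = (y - (Ψ xb y + z₂)) + (Ψ xb y - Ψ xb yb) := by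
        nth_rewrite 1 [hfix]; abel
      rw [this]; exact norm_add_le _ _
    have h3 : ‖Ψ xb y - Ψ xb yb‖ ≤ L * ‖y - yb‖ := hLipy xb y yb
    have : ‖y - (Ψ xb y + z₂)‖ = ‖y - Ψ xb y - z₂‖ := by congr 1; abel
    nlinarith
  have key2 : ‖y - Ψ xb y - z₂‖ ≤ ‖y - Ψ x y - z₂‖ + L₁ * ‖x - xb‖ := by
    have : y - Ψ xb y - z₂ = (y - Ψ x y - z₂) + (Ψ x y - Ψ xb y) := by abel
    rw [this]
    exact le_trans (norm_add_le _ _) (by linarith [hLipx y x xb])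
  have hnyb : ‖y - yb‖ ≤ (‖y - Ψ x y - z₂‖ + L₁ * ‖x - xb‖) / (1 - L) := by
    rw [le_div_iff₀ h1L]
    nlinarith
  rw [← hdist]
  have h0 : (0:ℝ) ≤ ‖x - xb‖ := norm_nonneg _
  calc ‖x - xb‖ + ‖y - yb‖
      ≤ ‖x - xb‖ + (‖y - Ψ x y - z₂‖ + L₁ * ‖x - xb‖) / (1 - L) := by linarith
    _ = (1 + L₁ / (1 - L)) * ‖x - xb‖ + (1 / (1 - L)) * ‖y - Ψ x y - z₂‖ := by
        field_simp; ring
end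

section
/- Let Ψ : ℝ^m × ℝⁿ → ℝⁿ be continuously differentiable and let L_s ∈ (0,1) be such that for every (x,y) ∈ ℝ^m × ℝⁿ the partial Fréchet derivative D_yΨ(x,y) (the derivative of the map y ↦ Ψ(x,y)) has operator norm at most L_s. Then there exists a unique function g : ℝ^m → ℝⁿ satisfying g(x) = Ψ(x, g(x)) for all x ∈ ℝ^m; moreover g is continuously differentiable, and for every x ∈ ℝ^m and every v ∈ ℝ^m its derivative satisfies (id − D_yΨ(x, g(x)))(Dg(x)·v) = D_xΨ(x, g(x))·v, i.e. Dg(x) = (id − D_yΨ(x,g(x)))⁻¹ ∘ D_xΨ(x,g(x)), where id − D_yΨ(x,g(x)) is invertible. -/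
/-!
For each `x` the map `Ψ (x, ·)` is a contraction by the mean value inequality, so it has a unique
fixed point `g x`. Near any `x₀`, the equation `y - Ψ (x, y) = 0` has partial derivative
`id - D_yΨ` in `y`, invertible by the Neumann series since `‖D_yΨ‖ < 1`; the implicit function
theorem then provides a `C¹` solution near `x₀`, which must agree with `g` by uniqueness of fixed
points. Differentiating `g x = Ψ (x, g x)` by the chain rule gives the formula for `Dg`.
-/

open ContinuousLinearMap
open scoped NNReal

theorem ContractingWith.existsUnique_forall_eq_apply {α β : Type*} [MetricSpace β] [Nonempty β]
    [CompleteSpace β] {K : ℝ≥0} {Ψ : α × β → β} (hΨ : ∀ x, ContractingWith K fun y => Ψ (x, y)) :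
    ∃! g : α → β, ∀ x, g x = Ψ (x, g x) :=
  ⟨fun x => fixedPoint _ (hΨ x), fun x => ((hΨ x).fixedPoint_isFixedPt).symm,
    fun _ hg => funext fun x => (hΨ x).fixedPoint_unique (hg x).symm⟩

section NontriviallyNormedField

variable {𝕜 : Type*} [NontriviallyNormedField 𝕜]
  {E : Type*} [NormedAddCommGroup E] [NormedSpace 𝕜 E]
  {F : Type*} [NormedAddCommGroup F] [NormedSpace 𝕜 F]

theorem ContinuousLinearMap.isInvertible_id_sub [CompleteSpace F] {A : F →L[𝕜] F}
    (hA : ‖A‖ < 1) : (ContinuousLinearMap.id 𝕜 F - A).IsInvertible :=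
  ⟨ContinuousLinearEquiv.unitsEquiv 𝕜 F (Units.oneSub A hA), rfl⟩

theorem DifferentiableAt.fderiv_comp_prodMk_left {Ψ : E × F → F} {x : E} {y : F}
    (hΨ : DifferentiableAt 𝕜 Ψ (x, y)) :
    fderiv 𝕜 (fun x' => Ψ (x', y)) x = fderiv 𝕜 Ψ (x, y) ∘L inl 𝕜 E F :=
  (hΨ.hasFDerivAt.comp x (hasFDerivAt_prodMk_left x y)).fderiv

theorem DifferentiableAt.fderiv_comp_prodMk_right {Ψ : E × F → F} {x : E} {y : F}
    (hΨ : DifferentiableAt 𝕜 Ψ (x, y)) :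
    fderiv 𝕜 (fun y' => Ψ (x, y')) y = fderiv 𝕜 Ψ (x, y) ∘L inr 𝕜 E F :=
  (hΨ.hasFDerivAt.comp y (hasFDerivAt_prodMk_right x y)).fderiv

theorem id_sub_fderiv_apply_fderiv_of_forall_eq {Ψ : E × F → F} {g : E → F}
    (hfix : ∀ x, g x = Ψ (x, g x)) {x : E} (hΨ : DifferentiableAt 𝕜 Ψ (x, g x))
    (hg : DifferentiableAt 𝕜 g x) (v : E) :
    (ContinuousLinearMap.id 𝕜 F - fderiv 𝕜 (fun y => Ψ (x, y)) (g x)) (fderiv 𝕜 g x v) =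
      fderiv 𝕜 (fun x' => Ψ (x', g x)) x v := by
  have hD : HasFDerivAt g
      (fderiv 𝕜 Ψ (x, g x) ∘L (ContinuousLinearMap.id 𝕜 E).prod (fderiv 𝕜 g x)) x := by
    have : HasFDerivAt (fun x => Ψ (x, g x)) _ x :=
      hΨ.hasFDerivAt.comp x ((hasFDerivAt_id x).prodMk hg.hasFDerivAt)
    rwa [← funext hfix] at this
  have hDv : fderiv 𝕜 g x v =
      fderiv 𝕜 Ψ (x, g x) (inl 𝕜 E F v + inr 𝕜 E F (fderiv 𝕜 g x v)) := by
    conv_lhs => rw [hD.fderiv]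
    simp
  rw [sub_apply, id_apply, hΨ.fderiv_comp_prodMk_left, hΨ.fderiv_comp_prodMk_right]
  exact sub_eq_of_eq_add (hDv.trans (map_add _ _ _))

end NontriviallyNormedField

section RCLike

variable {𝕜 : Type*} [RCLike 𝕜]
  {E : Type*} [NormedAddCommGroup E] [NormedSpace 𝕜 E]
  {F : Type*} [NormedAddCommGroup F] [NormedSpace 𝕜 F]

theorem contractingWith_of_norm_fderiv_le {f : F → F} (hf : Differentiable 𝕜 f) {K : ℝ≥0}
    (hK : K < 1) (hD : ∀ y, ‖fderiv 𝕜 f y‖ ≤ K) : ContractingWith K f :=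
  ⟨hK, lipschitzWith_of_nnnorm_fderiv_le hf fun y => by exact_mod_cast hD y⟩

theorem contDiff_of_forall_eq_of_contractingWith [CompleteSpace E] [CompleteSpace F]
    {n : WithTop ℕ∞} {Ψ : E × F → F} (hΨ : ContDiff 𝕜 n Ψ) (hn : n ≠ 0) {K : ℝ≥0}
    (hK : ∀ x, ContractingWith K fun y => Ψ (x, y)) {g : E → F} (hg : ∀ x, g x = Ψ (x, g x)) :
    ContDiff 𝕜 n g := by
  refine contDiff_iff_contDiffAt.2 fun x₀ => ?_
  set u : E × F := (x₀, g x₀)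
  have hΨu : DifferentiableAt 𝕜 Ψ u := hΨ.differentiable hn u
  have hf : ContDiffAt 𝕜 n (fun p : E × F => p.2 - Ψ p) u := (contDiff_snd.sub hΨ).contDiffAt
  have hinv : (fderiv 𝕜 (fun p : E × F => p.2 - Ψ p) u ∘L inr 𝕜 E F).IsInvertible := by
    have : HasFDerivAt (fun p : E × F => p.2 - Ψ p) _ u := hasFDerivAt_snd.sub hΨu.hasFDerivAt
    rw [this.fderiv, sub_comp, snd_comp_inr, ← hΨu.fderiv_comp_prodMk_right]
    exact isInvertible_id_sub ((norm_fderiv_le_of_lipschitz 𝕜 (hK x₀).2).trans_lt (hK x₀).1)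
  set ψ := hf.implicitFunction hn hinv
  refine (hf.contDiffAt_implicitFunction hn hinv).congr_of_eventuallyEq ?_
  filter_upwards [hf.eventually_apply_implicitFunction hn hinv] with x hx
  have hψ : ψ x = Ψ (x, ψ x) := by simpa [u, sub_eq_zero, ← hg x₀] using hx
  exact (hK x).fixedPoint_unique' (hg x).symm hψ.symm

end RCLike

theorem stmt_7_general {m n : ℕ}
    (Ψ : EuclideanSpace ℝ (Fin m) × EuclideanSpace ℝ (Fin n) → EuclideanSpace ℝ (Fin n))
    (hΨ : ContDiff ℝ 1 Ψ) (Ls : ℝ) (hLs1 : Ls < 1)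
    (hD : ∀ (x : EuclideanSpace ℝ (Fin m)) (y : EuclideanSpace ℝ (Fin n)),
      ‖fderiv ℝ (fun y' => Ψ (x, y')) y‖ ≤ Ls) :
    ∃ g : EuclideanSpace ℝ (Fin m) → EuclideanSpace ℝ (Fin n),
      (∀ x, g x = Ψ (x, g x)) ∧
      (∀ g' : EuclideanSpace ℝ (Fin m) → EuclideanSpace ℝ (Fin n),
        (∀ x, g' x = Ψ (x, g' x)) → g' = g) ∧
      ContDiff ℝ 1 g ∧
      (∀ x : EuclideanSpace ℝ (Fin m),
        Function.Bijective
          ⇑(ContinuousLinearMap.id ℝ (EuclideanSpace ℝ (Fin n))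
              - fderiv ℝ (fun y' => Ψ (x, y')) (g x))) ∧
      ∀ (x : EuclideanSpace ℝ (Fin m)) (v : EuclideanSpace ℝ (Fin m)),
        (ContinuousLinearMap.id ℝ (EuclideanSpace ℝ (Fin n))
            - fderiv ℝ (fun y' => Ψ (x, y')) (g x)) (fderiv ℝ g x v)
          = fderiv ℝ (fun x' => Ψ (x', g x)) x v := by
  have hΨd : Differentiable ℝ Ψ := hΨ.differentiable one_ne_zero
  have hcontr (x : EuclideanSpace ℝ (Fin m)) : ContractingWith Ls.toNNReal fun y => Ψ (x, y) :=
    contractingWith_of_norm_fderiv_le (by fun_prop) (Real.toNNReal_lt_one.2 hLs1)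
      fun y => (hD x y).trans (Real.le_coe_toNNReal Ls)
  obtain ⟨g, hg, huniq⟩ := ContractingWith.existsUnique_forall_eq_apply hcontr
  have hgC : ContDiff ℝ 1 g := contDiff_of_forall_eq_of_contractingWith hΨ one_ne_zero hcontr hg
  exact ⟨g, hg, huniq, hgC, fun x => (isInvertible_id_sub ((hD x (g x)).trans_lt hLs1)).bijective,
    fun x => id_sub_fderiv_apply_fderiv_of_forall_eq hg (hΨd _) (hgC.differentiable one_ne_zero x)⟩

/-- Implicit function theorem for parametric contraction fixed points: if `Ψ` is `C¹` and
`‖D_yΨ(x,y)‖ ≤ L_s < 1` everywhere, then the fixed-point map `g` (with `g(x) = Ψ(x,g(x))`)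
exists, is unique, is `C¹`, the linear map `id - D_yΨ(x,g(x))` is invertible, and the
derivative of `g` satisfies `(id - D_yΨ(x,g(x))) (Dg(x) v) = D_xΨ(x,g(x)) v`. -/
theorem stmt_7 {m n : ℕ}
    (Ψ : EuclideanSpace ℝ (Fin m) × EuclideanSpace ℝ (Fin n) → EuclideanSpace ℝ (Fin n))
    (hΨ : ContDiff ℝ 1 Ψ) (Ls : ℝ) (hLs0 : 0 < Ls) (hLs1 : Ls < 1)
    (hD : ∀ (x : EuclideanSpace ℝ (Fin m)) (y : EuclideanSpace ℝ (Fin n)),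
      ‖fderiv ℝ (fun y' => Ψ (x, y')) y‖ ≤ Ls) :
    ∃ g : EuclideanSpace ℝ (Fin m) → EuclideanSpace ℝ (Fin n),
      (∀ x, g x = Ψ (x, g x)) ∧
      (∀ g' : EuclideanSpace ℝ (Fin m) → EuclideanSpace ℝ (Fin n),
        (∀ x, g' x = Ψ (x, g' x)) → g' = g) ∧
      ContDiff ℝ 1 g ∧
      (∀ x : EuclideanSpace ℝ (Fin m),
        Function.Bijective
          ⇑(ContinuousLinearMap.id ℝ (EuclideanSpace ℝ (Fin n))
              - fderiv ℝ (fun y' => Ψ (x, y')) (g x))) ∧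
      ∀ (x : EuclideanSpace ℝ (Fin m)) (v : EuclideanSpace ℝ (Fin m)),
        (ContinuousLinearMap.id ℝ (EuclideanSpace ℝ (Fin n))
            - fderiv ℝ (fun y' => Ψ (x, y')) (g x)) (fderiv ℝ g x v)
          = fderiv ℝ (fun x' => Ψ (x', g x)) x v :=
  stmt_7_general Ψ hΨ Ls hLs1 hD
end

section
/- Let X ⊆ ℝ^m be nonempty and compact, L ∈ (0,1), L_s ∈ (0,1). Let Ψ : ℝ^m × ℝⁿ → ℝⁿ be such that Ψ(x,·) is L-Lipschitz on ℝⁿ for every x ∈ X and Ψ(·,y) is continuous on X for every y ∈ ℝⁿ. For each μ ∈ (0,1] let Ψ_μ : ℝ^m × ℝⁿ → ℝⁿ be such that Ψ_μ(x,·) is L_s-Lipschitz on ℝⁿ for every x ∈ X. Assume the continuous convergence property: for all sequences x^t ∈ X with x^t → x ∈ X, y^t → y in ℝⁿ, and μ_t ∈ (0,1] with μ_t → 0, one has Ψ_{μ_t}(x^t, y^t) → Ψ(x, y). For x ∈ X denote by y(x) and y_μ(x) the unique fixed points of Ψ(x,·) and Ψ_μ(x,·), and let f : ℝ^m × ℝⁿ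 → ℝ be continuous; define h(x) = f(x, y(x)) and h_μ(x) = f(x, y_μ(x)). Then (solution consistency): for any sequences μ_t ∈ (0,1] with μ_t → 0 and x^t ∈ X with h_{μ_t}(x^t) ≤ h_{μ_t}(x) for all x ∈ X, if x^t → x̄, then x̄ ∈ X, h(x̄) ≤ h(x) for all x ∈ X, and y_{μ_t}(x^t) → y(x̄); i.e., every accumulation point of global minimizers of the smoothed problems is a global minimizer of the original problem. -/
open Filter

private lemma fixed_conv_aux {n : ℕ} (Ls : ℝ) (hLs1 : Ls < 1)
    (yt : ℕ → EuclideanSpace ℝ (Fin n)) (ystar : EuclideanSpace ℝ (Fin n))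
    (g : ℕ → EuclideanSpace ℝ (Fin n))
    (hbound : ∀ t, ‖yt t - ystar‖ ≤ Ls * ‖yt t - ystar‖ + ‖g t - ystar‖)
    (hg : Tendsto g atTop (nhds ystar)) : Tendsto yt atTop (nhds ystar) := by
  have h1 : (0:ℝ) < 1 - Ls := by linarith
  rw [tendsto_iff_norm_sub_tendsto_zero]
  have hg0 : Tendsto (fun t => ‖g t - ystar‖ / (1 - Ls)) atTop (nhds 0) := by
    have := (tendsto_iff_norm_sub_tendsto_zero.mp hg).div_const (1 - Ls)
    simpa using this
  refine squeeze_zero (fun t => norm_nonneg _) (fun t => ?_) hg0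
  rw [le_div_iff₀ h1]
  have := hbound t
  nlinarith [norm_nonneg (yt t - ystar), norm_nonneg (g t - ystar)]


/-- Solution consistency: accumulation points of global minimizers of the smoothed problems
`min_{x∈X} h_μ(x) = f(x, y_μ(x))` (as `μ ↓ 0`) are global minimizers of the original problem
`min_{x∈X} h(x) = f(x, y(x))`, and the corresponding fixed points converge. -/
theorem stmt_9 {m n : ℕ}
    (X : Set (EuclideanSpace ℝ (Fin m))) (hXne : X.Nonempty) (hXcpt : IsCompact X)
    (L Ls : ℝ) (hL0 : 0 < L) (hL1 : L < 1) (hLs0 : 0 < Ls) (hLs1 : Ls < 1)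
    (Ψ : EuclideanSpace ℝ (Fin m) → EuclideanSpace ℝ (Fin n) → EuclideanSpace ℝ (Fin n))
    (Ψμ : ℝ → EuclideanSpace ℝ (Fin m) → EuclideanSpace ℝ (Fin n) → EuclideanSpace ℝ (Fin n))
    (hΨLip : ∀ x ∈ X, ∀ y y' : EuclideanSpace ℝ (Fin n),
      ‖Ψ x y - Ψ x y'‖ ≤ L * ‖y - y'‖)
    (hΨcont : ∀ y : EuclideanSpace ℝ (Fin n), ContinuousOn (fun x => Ψ x y) X)
    (hΨμLip : ∀ μ ∈ Set.Ioc (0 : ℝ) 1, ∀ x ∈ X, ∀ y y' : EuclideanSpace ℝ (Fin n),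
      ‖Ψμ μ x y - Ψμ μ x y'‖ ≤ Ls * ‖y - y'‖)
    (hconv : ∀ (xs : ℕ → EuclideanSpace ℝ (Fin m)) (ys : ℕ → EuclideanSpace ℝ (Fin n))
        (μs : ℕ → ℝ) (x : EuclideanSpace ℝ (Fin m)) (y : EuclideanSpace ℝ (Fin n)),
      (∀ t, xs t ∈ X) → x ∈ X → Filter.Tendsto xs Filter.atTop (nhds x) →
      Filter.Tendsto ys Filter.atTop (nhds y) →
      (∀ t, μs t ∈ Set.Ioc (0 : ℝ) 1) → Filter.Tendsto μs Filter.atTop (nhds 0) →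
      Filter.Tendsto (fun t => Ψμ (μs t) (xs t) (ys t)) Filter.atTop (nhds (Ψ x y)))
    (yfix : EuclideanSpace ℝ (Fin m) → EuclideanSpace ℝ (Fin n))
    (yμfix : ℝ → EuclideanSpace ℝ (Fin m) → EuclideanSpace ℝ (Fin n))
    (hyfix : ∀ x ∈ X, yfix x = Ψ x (yfix x))
    (hyμfix : ∀ μ ∈ Set.Ioc (0 : ℝ) 1, ∀ x ∈ X, yμfix μ x = Ψμ μ x (yμfix μ x))
    (f : EuclideanSpace ℝ (Fin m) × EuclideanSpace ℝ (Fin n) → ℝ) (hf : Continuous f) :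
    ∀ (μs : ℕ → ℝ) (xs : ℕ → EuclideanSpace ℝ (Fin m)) (xbar : EuclideanSpace ℝ (Fin m)),
      (∀ t, μs t ∈ Set.Ioc (0 : ℝ) 1) → Filter.Tendsto μs Filter.atTop (nhds 0) →
      (∀ t, xs t ∈ X) →
      (∀ t, ∀ x ∈ X, f (xs t, yμfix (μs t) (xs t)) ≤ f (x, yμfix (μs t) x)) →
      Filter.Tendsto xs Filter.atTop (nhds xbar) →
      xbar ∈ X ∧ (∀ x ∈ X, f (xbar, yfix xbar) ≤ f (x, yfix x)) ∧
        Filter.Tendsto (fun t => yμfix (μs t) (xs t)) Filter.atTop (nhds (yfix xbar)) := by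

  intro μs xs xbar hμs hμ0 hxs hmin hx
  have hxbar : xbar ∈ X := hXcpt.isClosed.mem_of_tendsto hx (Filter.Eventually.of_forall hxs)
  -- convergence of fixed points along any X-valued convergent sequence
  have key : ∀ (zs : ℕ → EuclideanSpace ℝ (Fin m)) (z : EuclideanSpace ℝ (Fin m)),
      (∀ t, zs t ∈ X) → z ∈ X → Filter.Tendsto zs Filter.atTop (nhds z) →
      Filter.Tendsto (fun t => yμfix (μs t) (zs t)) Filter.atTop (nhds (yfix z)) := by
    intro zs z hzs hz hzt
    have hg : Filter.Tendsto (fun t => Ψμ (μs t) (zs t) (yfix z)) Filter.atTop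
        (nhds (yfix z)) := by
      have := hconv zs (fun _ => yfix z) μs z (yfix z) hzs hz hzt tendsto_const_nhds hμs hμ0
      rwa [← hyfix z hz] at this
    refine fixed_conv_aux Ls hLs1 _ _ _ (fun t => ?_) hg
    calc ‖yμfix (μs t) (zs t) - yfix z‖
        = ‖(Ψμ (μs t) (zs t) (yμfix (μs t) (zs t)) - Ψμ (μs t) (zs t) (yfix z))
            + (Ψμ (μs t) (zs t) (yfix z) - yfix z)‖ := by
          rw [← hyμfix (μs t) (hμs t) (zs t) (hzs t), sub_add_sub_cancel]
      _ ≤ ‖Ψμ (μs t) (zs t) (yμfix (μs t) (zs t)) - Ψμ (μs t) (zs t) (yfix z)‖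
            + ‖Ψμ (μs t) (zs t) (yfix z) - yfix z‖ := norm_add_le _ _
      _ ≤ Ls * ‖yμfix (μs t) (zs t) - yfix z‖ + ‖Ψμ (μs t) (zs t) (yfix z) - yfix z‖ := by
          gcongr; exact hΨμLip (μs t) (hμs t) (zs t) (hzs t) _ _
  have hyt : Filter.Tendsto (fun t => yμfix (μs t) (xs t)) Filter.atTop (nhds (yfix xbar)) :=
    key xs xbar hxs hxbar hx
  refine ⟨hxbar, fun x hxX => ?_, hyt⟩
  have h1 : Filter.Tendsto (fun t => f (xs t, yμfix (μs t) (xs t))) Filter.atTop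
      (nhds (f (xbar, yfix xbar))) := (hf.tendsto _).comp (hx.prodMk_nhds hyt)
  have h2 : Filter.Tendsto (fun t => f (x, yμfix (μs t) x)) Filter.atTop
      (nhds (f (x, yfix x))) := (hf.tendsto _).comp
    (tendsto_const_nhds.prodMk_nhds (key (fun _ => x) x (fun _ => hxX) hxX tendsto_const_nhds))
  exact le_of_tendsto_of_tendsto' h1 h2 (fun t => hmin t x hxX)
end

section
/- Let ρ : ℝ → ℝ be continuous with 0 ≤ ρ(t) for all t and ∫_ℝ ρ(t) dt = 1. Let l < u be real numbers and μ > 0, and define g : ℝ → ℝ by g(s) = ∫_ℝ mid{l, u, s − μt}·ρ(t) dt. Then g is differentiable at every s ∈ ℝ with derivative g'(s) = ∫_{(s−u)/μ}^{(s−l)/μ} ρ(t) dt. -/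
/-!
Differentiate under the integral sign. The clamp `c ↦ min (max l c) u` is 1-Lipschitz, so the
integrand is `|ρ t|`-Lipschitz in `s`, and off the two points where `s - μ t ∈ {l, u}` its
`s`-derivative is `ρ t` when `l < s - μ t < u`, i.e. `(s - u) / μ < t < (s - l) / μ`, and `0`
otherwise.
-/

open MeasureTheory Set Filter

lemma lipschitzWith_min_max (l u : ℝ) : LipschitzWith 1 (fun c : ℝ => min (max l c) u) :=
  (LipschitzWith.id.const_max l).min_const u

lemma abs_min_max_le {l u : ℝ} (hlu : l ≤ u) (c : ℝ) : |min (max l c) u| ≤ max |l| |u| :=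
  abs_le_max_abs_abs (le_min (le_max_left l c) hlu) (min_le_right _ _)

lemma hasDerivAt_min_max {l u c : ℝ} (hl : c ≠ l) (hu : c ≠ u) :
    HasDerivAt (fun x : ℝ => min (max l x) u) ((Ioo l u).indicator 1 c) c := by
  rcases hl.lt_or_gt with hcl | hcl
  · rw [indicator_of_notMem fun h => hcl.not_gt h.1]
    apply (hasDerivAt_const c (min l u)).congr_of_eventuallyEq
    filter_upwards [eventually_lt_nhds hcl] with x hx
    rw [max_eq_left hx.le]
  rcases hu.lt_or_gt with hcu | hcu
  · rw [indicator_of_mem (show c ∈ Ioo l u from ⟨hcl, hcu⟩)]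
    apply (hasDerivAt_id c).congr_of_eventuallyEq
    filter_upwards [eventually_gt_nhds hcl, eventually_lt_nhds hcu] with x hxl hxu
    rw [max_eq_right hxl.le, min_eq_left hxu.le, id]
  · rw [indicator_of_notMem fun h => hcu.not_gt h.2]
    apply (hasDerivAt_const c u).congr_of_eventuallyEq
    filter_upwards [eventually_gt_nhds hcu] with x hx
    rw [min_eq_right (hx.le.trans (le_max_right l x))]

lemma sub_mul_mem_Ioo_iff {l u μ s t : ℝ} (hμ : 0 < μ) :
    s - μ * t ∈ Ioo l u ↔ t ∈ Ioo ((s - u) / μ) ((s - l) / μ) := by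
  simp only [mem_Ioo, div_lt_iff₀ hμ, lt_div_iff₀ hμ]
  constructor <;> rintro ⟨h₁, h₂⟩ <;> constructor <;> linarith

lemma ae_sub_mul_ne (s c : ℝ) {μ : ℝ} (hμ : μ ≠ 0) : ∀ᵐ t ∂volume, s - μ * t ≠ c := by
  have : ∀ᵐ t ∂volume, t ≠ (s - c) / μ := by
    simp [ae_iff, measure_singleton]
  filter_upwards [this] with t ht h
  exact ht (by field_simp; linarith)

lemma lipschitzWith_min_max_sub_mul_mul (ρ : ℝ → ℝ) (l u μ t : ℝ) :
    LipschitzWith (Real.nnabs (ρ t)) (fun x => min (max l (x - μ * t)) u * ρ t) := by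
  refine .of_dist_le_mul fun x y => ?_
  have := (lipschitzWith_min_max l u).dist_le_mul (x - μ * t) (y - μ * t)
  rw [Real.dist_eq, Real.dist_eq, ← sub_mul, abs_mul, Real.coe_nnabs, mul_comm]
  simp only [Real.dist_eq, sub_sub_sub_cancel_right, NNReal.coe_one, one_mul] at this
  exact mul_le_mul_of_nonneg_left this (abs_nonneg _)

lemma hasDerivAt_min_max_sub_mul_mul (ρ : ℝ → ℝ) {l u μ s t : ℝ} (hμ : 0 < μ)
    (hl : s - μ * t ≠ l) (hu : s - μ * t ≠ u) :
    HasDerivAt (fun x => min (max l (x - μ * t)) u * ρ t)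
      ((Ioo ((s - u) / μ) ((s - l) / μ)).indicator ρ t) s := by
  refine (((hasDerivAt_min_max hl hu).comp s ((hasDerivAt_id s).sub_const (μ * t))).mul_const
    (ρ t)).congr_deriv ?_
  simp [indicator_apply, sub_mul_mem_Ioo_iff hμ]

theorem hasDerivAt_integral_min_max_sub_mul_mul {ρ : ℝ → ℝ} (hρ : Integrable ρ) {l u μ : ℝ}
    (hlu : l ≤ u) (hμ : 0 < μ) (s : ℝ) :
    HasDerivAt (fun s' : ℝ => ∫ t : ℝ, min (max l (s' - μ * t)) u * ρ t)
      (∫ t in ((s - u) / μ)..((s - l) / μ), ρ t) s := by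
  have hab : (s - u) / μ ≤ (s - l) / μ := div_le_div_of_nonneg_right (by linarith) hμ.le
  have hclamp_meas (x : ℝ) : AEStronglyMeasurable fun t => min (max l (x - μ * t)) u :=
    (by fun_prop : Continuous fun t => min (max l (x - μ * t)) u).aestronglyMeasurable
  have hint : Integrable fun t => min (max l (s - μ * t)) u * ρ t :=
    hρ.bdd_mul (hclamp_meas s) (.of_forall fun t => abs_min_max_le hlu _)
  rw [intervalIntegral.integral_of_le hab, integral_Ioc_eq_integral_Ioo,
    ← integral_indicator measurableSet_Ioo]
  refine (hasDerivAt_integral_of_dominated_loc_of_lip (bound := ρ) univ_mem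
    (.of_forall fun x => (hclamp_meas x).mul hρ.1) hint (hρ.1.indicator measurableSet_Ioo)
    (.of_forall fun t => (lipschitzWith_min_max_sub_mul_mul ρ l u μ t).lipschitzOnWith) hρ ?_).2
  filter_upwards [ae_sub_mul_ne s l hμ.ne', ae_sub_mul_ne s u hμ.ne'] with t hl hu
  exact hasDerivAt_min_max_sub_mul_mul ρ hμ hl hu

theorem stmt_12_general (ρ : ℝ → ℝ)
    (hint : (∫ t : ℝ, ρ t) = 1) (l u μ : ℝ) (hlu : l < u) (hμ : 0 < μ) :
    ∀ s : ℝ,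
      HasDerivAt (fun s' : ℝ => ∫ t : ℝ, min (max l (s' - μ * t)) u * ρ t)
        (∫ t in ((s - u) / μ)..((s - l) / μ), ρ t) s :=
  hasDerivAt_integral_min_max_sub_mul_mul (integrable_of_integral_eq_one hint) hlu.le hμ

/-- Differentiability of the smoothed median (clamp): with `mid{l,u,c} = min (max l c) u`
(the clamp of `c` to `[l,u]`), the function `g(s) = ∫ mid{l, u, s - μt} ρ(t) dt` is
differentiable with `g'(s) = ∫_{(s-u)/μ}^{(s-l)/μ} ρ(t) dt`. -/
theorem stmt_12 (ρ : ℝ → ℝ) (hcont : Continuous ρ) (hnn : ∀ t, 0 ≤ ρ t)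
    (hint : (∫ t : ℝ, ρ t) = 1) (l u μ : ℝ) (hlu : l < u) (hμ : 0 < μ) :
    ∀ s : ℝ,
      HasDerivAt (fun s' : ℝ => ∫ t : ℝ, min (max l (s' - μ * t)) u * ρ t)
        (∫ t in ((s - u) / μ)..((s - l) / μ), ρ t) s :=
  stmt_12_general ρ hint l u μ hlu hμ
end

section
/- Let E be m-dimensional Euclidean space, X ⊆ E a convex set, L_h ≥ 0, ζ > 0, and let h : E → ℝ be differentiable with gradient ∇h satisfying ‖∇h(a) − ∇h(b)‖ ≤ L_h‖a − b‖ for all a, b ∈ E. Let x ∈ X, d ∈ E, and let x⁺ ∈ X satisfy the projection optimality condition ⟨x − ζ·d − x⁺, w − x⁺⟩ ≤ 0 for all w ∈ X (i.e., x⁺ is the metric projection of x − ζd onto X). Then h(x⁺) − h(x) ≤ (ζ/2)·‖∇h(x) − d‖² + (L_h/2 − 1/(2ζ))·‖x⁺ − x‖². -/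
/-!
The Lipschitz gradient gives the descent lemma
`h x⁺ - h x ≤ ⟪∇h x, x⁺ - x⟫ + (L_h/2)‖x⁺ - x‖²`. Split `⟪∇h x, x⁺ - x⟫` as
`⟪∇h x - d, x⁺ - x⟫ + ⟪d, x⁺ - x⟫`: Young's inequality bounds the first term by
`(ζ/2)‖∇h x - d‖² + (1/(2ζ))‖x⁺ - x‖²`, and the projection condition tested at `w = x` bounds
the second by `-(1/ζ)‖x⁺ - x‖²`.
-/

open scoped RealInnerProductSpace

theorem image_sub_le_fderiv_add_of_lipschitz {E : Type*} [NormedAddCommGroup E]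
    [NormedSpace ℝ E] {f : E → ℝ} {f' : E → StrongDual ℝ E} {L : ℝ}
    (hf : ∀ z, HasFDerivAt f (f' z) z) {x : E} (hL : ∀ z, ‖f' z - f' x‖ ≤ L * ‖z - x‖) (y : E) :
    f y - f x ≤ f' x (y - x) + L / 2 * ‖y - x‖ ^ 2 := by
  set v := y - x
  -- `φ` is antitone on `[0, ∞)`, and `φ 1 ≤ φ 0` is the claim.
  let φ : ℝ → ℝ := fun t ↦ f (x + t • v) - t * f' x v - L / 2 * t ^ 2 * ‖v‖ ^ 2
  let φ' : ℝ → ℝ := fun t ↦ (f' (x + t • v) - f' x) v - L * t * ‖v‖ ^ 2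
  have hφ : ∀ t, HasDerivAt φ (φ' t) t := by
    intro t
    have hline : HasDerivAt (fun s : ℝ ↦ x + s • v) v t := by
      simpa using ((hasDerivAt_id t).smul_const v).const_add x
    have := (((hf _).comp_hasDerivAt t hline).sub ((hasDerivAt_id t).mul_const (f' x v))).sub
      (((hasDerivAt_pow 2 t).const_mul (L / 2)).mul_const (‖v‖ ^ 2))
    refine (this : HasDerivAt φ _ t).congr_deriv ?_
    simp only [φ', sub_apply]
    ring
  have hφ'_nonpos : ∀ t ∈ interior (Set.Ici (0 : ℝ)), φ' t ≤ 0 := by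
    intro t ht
    rw [interior_Ici] at ht
    refine sub_nonpos.2 ?_
    calc (f' (x + t • v) - f' x) v ≤ ‖f' (x + t • v) - f' x‖ * ‖v‖ :=
          (le_abs_self _).trans ((f' (x + t • v) - f' x).le_opNorm v)
      _ ≤ L * ‖t • v‖ * ‖v‖ := by gcongr; simpa using hL (x + t • v)
      _ = L * t * ‖v‖ ^ 2 := by rw [norm_smul, Real.norm_of_nonneg ht.le]; ring
  have hanti := antitoneOn_of_hasDerivWithinAt_nonpos (convex_Ici 0)
    (fun t _ ↦ (hφ t).continuousAt.continuousWithinAt) (fun t _ ↦ (hφ t).hasDerivWithinAt)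
    hφ'_nonpos
  have := hanti Set.self_mem_Ici (Set.mem_Ici.2 zero_le_one) zero_le_one
  simp only [φ, zero_smul, one_smul, add_zero, zero_mul, one_mul, v, add_sub_cancel] at this
  linarith

theorem image_sub_le_inner_gradient_add_of_lipschitz {F : Type*} [NormedAddCommGroup F]
    [InnerProductSpace ℝ F] [CompleteSpace F] {f : F → ℝ} {g : F → F} {L : ℝ}
    (hf : ∀ z, HasGradientAt f (g z) z) {x : F} (hL : ∀ z, ‖g z - g x‖ ≤ L * ‖z - x‖) (y : F) :
    f y - f x ≤ ⟪g x, y - x⟫ + L / 2 * ‖y - x‖ ^ 2 := by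
  refine (image_sub_le_fderiv_add_of_lipschitz (L := L) (fun z ↦ (hf z).hasFDerivAt)
    (fun z ↦ ?_) y).trans_eq ?_
  · rw [← map_sub, LinearIsometryEquiv.norm_map]
    exact hL z
  · rw [InnerProductSpace.toDual_apply_apply]

theorem real_inner_le_mul_norm_sq_add_div {F : Type*} [NormedAddCommGroup F]
    [InnerProductSpace ℝ F] (u v : F) {ζ : ℝ} (hζ : 0 < ζ) :
    ⟪u, v⟫ ≤ ζ / 2 * ‖u‖ ^ 2 + 1 / (2 * ζ) * ‖v‖ ^ 2 := by
  have hyoung : 2 * ζ * (‖u‖ * ‖v‖) ≤ ζ ^ 2 * ‖u‖ ^ 2 + ‖v‖ ^ 2 := by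
    nlinarith [sq_nonneg (ζ * ‖u‖ - ‖v‖)]
  calc ⟪u, v⟫ ≤ ‖u‖ * ‖v‖ := real_inner_le_norm u v
    _ ≤ (ζ ^ 2 * ‖u‖ ^ 2 + ‖v‖ ^ 2) / (2 * ζ) := by
      rw [le_div_iff₀ (by positivity)]; linarith
    _ = ζ / 2 * ‖u‖ ^ 2 + 1 / (2 * ζ) * ‖v‖ ^ 2 := by field_simp

theorem stmt_15_general {m : ℕ}
    (X : Set (EuclideanSpace ℝ (Fin m)))
    (Lh ζ : ℝ) (hζ : 0 < ζ)
    (h : EuclideanSpace ℝ (Fin m) → ℝ)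
    (g : EuclideanSpace ℝ (Fin m) → EuclideanSpace ℝ (Fin m))
    (hgrad : ∀ a, HasGradientAt h (g a) a)
    (hglip : ∀ a b, ‖g a - g b‖ ≤ Lh * ‖a - b‖)
    (x xp d : EuclideanSpace ℝ (Fin m)) (hx : x ∈ X)
    (hproj : ∀ w ∈ X, ⟪x - ζ • d - xp, w - xp⟫ ≤ 0) :
    h xp - h x ≤ (ζ / 2) * ‖g x - d‖ ^ 2 + (Lh / 2 - 1 / (2 * ζ)) * ‖xp - x‖ ^ 2 := by
  set v := xp - x
  have hdescent : h xp - h x ≤ ⟪g x, v⟫ + Lh / 2 * ‖v‖ ^ 2 :=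
    image_sub_le_inner_gradient_add_of_lipschitz hgrad (fun z ↦ hglip z x) xp
  have hstep : ⟪d, v⟫ ≤ -(2 * (1 / (2 * ζ))) * ‖v‖ ^ 2 := by
    have hx' : x - ζ • d - xp = -(v + ζ • d) := by simp only [v]; abel
    have := hproj x hx
    rw [hx', show x - xp = -v by simp only [v, neg_sub], inner_neg_neg, inner_add_left,
      real_inner_smul_left, real_inner_self_eq_norm_sq] at this
    rw [show -(2 * (1 / (2 * ζ))) * ‖v‖ ^ 2 = -‖v‖ ^ 2 / ζ by field_simp, le_div_iff₀ hζ]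
    linarith
  have hyoung := real_inner_le_mul_norm_sq_add_div (g x - d) v hζ
  rw [inner_sub_left] at hyoung
  linarith

/-- Descent estimate for one projected inexact-gradient step `x⁺ = Proj_X(x - ζ d)`:
if `∇h` is `L_h`-Lipschitz then
`h(x⁺) - h(x) ≤ (ζ/2)‖∇h(x) - d‖² + (L_h/2 - 1/(2ζ))‖x⁺ - x‖²`. -/
theorem stmt_15 {m : ℕ}
    (X : Set (EuclideanSpace ℝ (Fin m))) (hX : Convex ℝ X)
    (Lh ζ : ℝ) (hLh : 0 ≤ Lh) (hζ : 0 < ζ)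
    (h : EuclideanSpace ℝ (Fin m) → ℝ)
    (g : EuclideanSpace ℝ (Fin m) → EuclideanSpace ℝ (Fin m))
    (hgrad : ∀ a, HasGradientAt h (g a) a)
    (hglip : ∀ a b, ‖g a - g b‖ ≤ Lh * ‖a - b‖)
    (x xp d : EuclideanSpace ℝ (Fin m)) (hx : x ∈ X) (hxp : xp ∈ X)
    (hproj : ∀ w ∈ X, ⟪x - ζ • d - xp, w - xp⟫ ≤ 0) :
    h xp - h x ≤ (ζ / 2) * ‖g x - d‖ ^ 2 + (Lh / 2 - 1 / (2 * ζ)) * ‖xp - x‖ ^ 2 :=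
  stmt_15_general X Lh ζ hζ h g hgrad hglip x xp d hx hproj
end

section
/- Let (x^t) be a sequence in a normed space E, (γ_t) and (R_t) real sequences, and let θ > 0, h₀ ∈ ℝ, M ≥ 0, and T̃ ∈ ℕ. Suppose: γ_t ≥ h₀ for all t; R_t ≥ 0 for all t ≥ T̃; the partial sums Σ_{t=T̃}^{T−1} R_t ≤ M for all T > T̃; and the descent inequality γ_{t+1} − γ_t ≤ −θ·‖x^{t+1} − x^t‖² + R_t holds for all t ≥ T̃. Then for every T > T̃ there exists t with T̃ ≤ t ≤ T − 1 such that ‖x^{t+1} − x^t‖² ≤ (γ_{T̃} − h₀ + M)/(θ·(T − T̃)); consequently there is a subsequence (t_j) with ‖x^{t_j+1} − x^{t_j}‖ = O(t_j^{−1/2}) as t_j → ∞. -/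
/-! Summing the descent inequality over a window `[S, T)` telescopes `γ`, so
`θ ∑_{t ∈ [S, T)} ‖x^{t+1} - x^t‖² ≤ γ_S - h₀ + M`, and the smallest term of the window is
at most the average. Since `γ_S ≤ γ_{T̃} + M`, applying this to the windows `[S, 2S)` gives
infinitely many `t` with `‖x^{t+1} - x^t‖² ≤ B / t` for a fixed `B`; these `t` form the
subsequence. -/

open Filter

section Descent

variable {f γ R : ℕ → ℝ} {θ h₀ M : ℝ} {T₀ : ℕ}

theorem mul_sum_Ico_le_of_descent
    (hdesc : ∀ t, T₀ ≤ t → γ (t + 1) - γ t ≤ -θ * f t + R t)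
    {S T : ℕ} (hS : T₀ ≤ S) (hST : S ≤ T) :
    θ * ∑ t ∈ Finset.Ico S T, f t ≤ γ S - γ T + ∑ t ∈ Finset.Ico S T, R t := by
  have h := Finset.sum_le_sum fun t (ht : t ∈ Finset.Ico S T) =>
    hdesc t (hS.trans (Finset.mem_Ico.mp ht).1)
  rw [Finset.sum_Ico_sub γ hST, Finset.sum_add_distrib, ← Finset.mul_sum] at h
  linarith

theorem sum_Ico_le_of_nonneg_of_sum_Ico_le (hR : ∀ t, T₀ ≤ t → 0 ≤ R t)
    (hRsum : ∀ T, T₀ < T → ∑ t ∈ Finset.Ico T₀ T, R t ≤ M)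
    {S T : ℕ} (hS : T₀ ≤ S) (hST : S < T) :
    ∑ t ∈ Finset.Ico S T, R t ≤ M :=
  calc ∑ t ∈ Finset.Ico S T, R t ≤ ∑ t ∈ Finset.Ico T₀ T, R t :=
        Finset.sum_le_sum_of_subset_of_nonneg (Finset.Ico_subset_Ico hS le_rfl)
          fun t ht _ => hR t (Finset.mem_Ico.mp ht).1
    _ ≤ M := hRsum T (hS.trans_lt hST)

theorem nonneg_of_sum_Ico_le (hR : ∀ t, T₀ ≤ t → 0 ≤ R t)
    (hRsum : ∀ T, T₀ < T → ∑ t ∈ Finset.Ico T₀ T, R t ≤ M) : 0 ≤ M :=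
  (hR T₀ le_rfl).trans (by simpa using hRsum (T₀ + 1) (Nat.lt_succ_self T₀))

theorem le_add_of_descent (hf : ∀ t, 0 ≤ f t) (hθ : 0 < θ)
    (hR : ∀ t, T₀ ≤ t → 0 ≤ R t)
    (hRsum : ∀ T, T₀ < T → ∑ t ∈ Finset.Ico T₀ T, R t ≤ M)
    (hdesc : ∀ t, T₀ ≤ t → γ (t + 1) - γ t ≤ -θ * f t + R t) {S : ℕ}
    (hS : T₀ ≤ S) :
    γ S ≤ γ T₀ + M := by
  rcases hS.eq_or_lt with rfl | hS
  · linarith [nonneg_of_sum_Ico_le hR hRsum]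
  have hdec := mul_sum_Ico_le_of_descent hdesc le_rfl hS.le
  have hres := sum_Ico_le_of_nonneg_of_sum_Ico_le hR hRsum le_rfl hS
  have := mul_nonneg hθ.le (Finset.sum_nonneg fun t (_ : t ∈ Finset.Ico T₀ S) => hf t)
  linarith

theorem exists_mem_Ico_le_div_of_descent (hθ : 0 < θ) (hγ : ∀ t, h₀ ≤ γ t)
    (hR : ∀ t, T₀ ≤ t → 0 ≤ R t)
    (hRsum : ∀ T, T₀ < T → ∑ t ∈ Finset.Ico T₀ T, R t ≤ M)
    (hdesc : ∀ t, T₀ ≤ t → γ (t + 1) - γ t ≤ -θ * f t + R t) {S T : ℕ} (hS : T₀ ≤ S)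
    (hST : S < T) :
    ∃ t, S ≤ t ∧ t < T ∧ f t ≤ (γ S - h₀ + M) / (θ * ((T : ℝ) - (S : ℝ))) := by
  have hlen : (0 : ℝ) < (T : ℝ) - (S : ℝ) := sub_pos.mpr (Nat.cast_lt.mpr hST)
  have hsum : θ * ∑ t ∈ Finset.Ico S T, f t ≤ γ S - h₀ + M := by
    have := mul_sum_Ico_le_of_descent hdesc hS hST.le
    have := sum_Ico_le_of_nonneg_of_sum_Ico_le hR hRsum hS hST
    linarith [hγ T]
  have hconst : ∑ t ∈ Finset.Ico S T, f t ≤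
      ∑ _t ∈ Finset.Ico S T, (γ S - h₀ + M) / (θ * ((T : ℝ) - (S : ℝ))) :=
    calc ∑ t ∈ Finset.Ico S T, f t ≤ (γ S - h₀ + M) / θ := (le_div_iff₀' hθ).mpr hsum
      _ = _ := by
        rw [Finset.sum_const, Nat.card_Ico, nsmul_eq_mul, Nat.cast_sub hST.le]
        field_simp
  obtain ⟨t, ht, hft⟩ := Finset.exists_le_of_sum_le (Finset.nonempty_Ico.mpr hST) hconst
  exact ⟨t, (Finset.mem_Ico.mp ht).1, (Finset.mem_Ico.mp ht).2, hft⟩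

theorem frequently_le_div_of_descent (hf : ∀ t, 0 ≤ f t) (hθ : 0 < θ) (hγ : ∀ t, h₀ ≤ γ t)
    (hR : ∀ t, T₀ ≤ t → 0 ≤ R t)
    (hRsum : ∀ T, T₀ < T → ∑ t ∈ Finset.Ico T₀ T, R t ≤ M)
    (hdesc : ∀ t, T₀ ≤ t → γ (t + 1) - γ t ≤ -θ * f t + R t) :
    ∃ᶠ t in atTop, f t ≤ 2 * (γ T₀ - h₀ + 2 * M) / θ / t := by
  refine frequently_atTop.mpr fun a => ?_
  set S := max a (max T₀ 1)
  have hT₀S : T₀ ≤ S := le_max_of_le_right (le_max_left _ _)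
  have hSpos : (0 : ℝ) < S :=
    Nat.cast_pos.mpr ((le_max_right T₀ 1).trans (le_max_right a _))
  obtain ⟨t, hSt, ht2S, hft⟩ :=
    exists_mem_Ico_le_div_of_descent hθ hγ hR hRsum hdesc hT₀S (by omega : S < 2 * S)
  refine ⟨t, (le_max_left _ _).trans hSt, hft.trans ?_⟩
  have hK : γ S - h₀ + M ≤ γ T₀ - h₀ + 2 * M := by
    linarith [le_add_of_descent hf hθ hR hRsum hdesc hT₀S]
  have hθt : θ * t ≤ θ * (2 * S) := by
    gcongr
    exact_mod_cast ht2S.le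
  have htpos : (0 : ℝ) < t := hSpos.trans_le (Nat.cast_le.mpr hSt)
  push_cast
  rw [show (2 : ℝ) * S - S = S by ring, div_div, div_le_div_iff₀ (by positivity) (by positivity)]
  calc (γ S - h₀ + M) * (θ * t) ≤ (γ T₀ - h₀ + 2 * M) * (θ * (2 * S)) :=
        mul_le_mul hK hθt (by positivity) (by linarith [hγ S, nonneg_of_sum_Ico_le hR hRsum])
    _ = 2 * (γ T₀ - h₀ + 2 * M) * (θ * S) := by ring

end Descent

theorem le_mul_rpow_neg_half_of_sq_le_div {a B C t : ℝ} (ha : 0 ≤ a) (hC : 0 ≤ C)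
    (hBC : B ≤ C ^ 2) (ht : 0 < t) (h : a ^ 2 ≤ B / t) :
    a ≤ C * t ^ (-(1 : ℝ) / 2) := by
  have hsq : (C * t ^ (-(1 : ℝ) / 2)) ^ 2 = C ^ 2 / t := by
    rw [mul_pow, ← Real.rpow_natCast (t ^ _), ← Real.rpow_mul ht.le]
    norm_num [Real.rpow_neg_one, div_eq_mul_inv]
  refine (pow_le_pow_iff_left₀ ha (by positivity) two_ne_zero).mp ?_
  rw [hsq]
  exact h.trans (div_le_div_of_nonneg_right hBC ht.le)

theorem stmt_16_general {E : Type*} [NormedAddCommGroup E]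
    (x : ℕ → E) (γ R : ℕ → ℝ) (θ h₀ M : ℝ) (T₀ : ℕ)
    (hθ : 0 < θ)
    (hγ : ∀ t, h₀ ≤ γ t)
    (hR : ∀ t, T₀ ≤ t → 0 ≤ R t)
    (hRsum : ∀ T, T₀ < T → ∑ t ∈ Finset.Ico T₀ T, R t ≤ M)
    (hdesc : ∀ t, T₀ ≤ t →
      γ (t + 1) - γ t ≤ -θ * ‖x (t + 1) - x t‖ ^ 2 + R t) :
    (∀ T, T₀ < T → ∃ t, T₀ ≤ t ∧ t < T ∧
        ‖x (t + 1) - x t‖ ^ 2 ≤ (γ T₀ - h₀ + M) / (θ * ((T : ℝ) - (T₀ : ℝ))))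
    ∧ ∃ φ : ℕ → ℕ, StrictMono φ ∧ (∀ j, 1 ≤ φ j ∧ T₀ ≤ φ j) ∧
        ∃ C : ℝ, 0 < C ∧
          ∀ j, ‖x (φ j + 1) - x (φ j)‖ ≤ C * ((φ j : ℝ)) ^ (-(1 : ℝ) / 2) := by
  refine ⟨fun T hT => exists_mem_Ico_le_div_of_descent hθ hγ hR hRsum hdesc le_rfl hT, ?_⟩
  set B := 2 * (γ T₀ - h₀ + 2 * M) / θ
  have hfreq :=
    (frequently_le_div_of_descent (fun t => sq_nonneg _) hθ hγ hR hRsum hdesc).and_eventually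
      ((eventually_ge_atTop 1).and (eventually_ge_atTop T₀))
  obtain ⟨φ, hφ, hφP⟩ := extraction_of_frequently_atTop hfreq
  refine ⟨φ, hφ, fun j => (hφP j).2, |B| + 1, by positivity, fun j => ?_⟩
  refine le_mul_rpow_neg_half_of_sq_le_div (norm_nonneg _) (by positivity) ?_
    (Nat.cast_pos.mpr (hφP j).2.1) (hφP j).1
  nlinarith [le_abs_self B, abs_nonneg B]

/-- From the descent inequality `γ_{t+1} - γ_t ≤ -θ‖x^{t+1} - x^t‖² + R_t` (for `t ≥ T̃`)
with lower-bounded `γ` and summable nonnegative residuals `R_t`, each window `[T̃, T)`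
contains an index with small squared step, and consequently there is a subsequence along
which `‖x^{t_j+1} - x^{t_j}‖ = O(t_j^{-1/2})`. -/
theorem stmt_16 {E : Type*} [NormedAddCommGroup E]
    (x : ℕ → E) (γ R : ℕ → ℝ) (θ h₀ M : ℝ) (T₀ : ℕ)
    (hθ : 0 < θ) (hM : 0 ≤ M)
    (hγ : ∀ t, h₀ ≤ γ t)
    (hR : ∀ t, T₀ ≤ t → 0 ≤ R t)
    (hRsum : ∀ T, T₀ < T → ∑ t ∈ Finset.Ico T₀ T, R t ≤ M)
    (hdesc : ∀ t, T₀ ≤ t →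
      γ (t + 1) - γ t ≤ -θ * ‖x (t + 1) - x t‖ ^ 2 + R t) :
    (∀ T, T₀ < T → ∃ t, T₀ ≤ t ∧ t < T ∧
        ‖x (t + 1) - x t‖ ^ 2 ≤ (γ T₀ - h₀ + M) / (θ * ((T : ℝ) - (T₀ : ℝ))))
    ∧ ∃ φ : ℕ → ℕ, StrictMono φ ∧ (∀ j, 1 ≤ φ j ∧ T₀ ≤ φ j) ∧
        ∃ C : ℝ, 0 < C ∧
          ∀ j, ‖x (φ j + 1) - x (φ j)‖ ≤ C * ((φ j : ℝ)) ^ (-(1 : ℝ) / 2) :=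
  stmt_16_general x γ R θ h₀ M T₀ hθ hγ hR hRsum hdesc
end

section
/- Let A be an r × n real matrix, c ∈ ℝⁿ, X ⊆ ℝ^m, L_b ≥ 0, and let b : ℝ^m → ℝ^r be L_b-Lipschitz on X. For x ∈ X define the polyhedron Ω(x) = {y ∈ ℝⁿ : A·y ≥ b(x) componentwise and y ≥ c componentwise}, and assume Ω(x) is nonempty for every x ∈ X. For x ∈ X and v ∈ ℝⁿ let P(x,v) denote the metric projection of v onto Ω(x). Then there exists L' ≥ 0 such that for every v ∈ ℝⁿ and all x₁, x₂ ∈ X, ‖P(x₁, v) − P(x₂, v)‖ ≤ L'·‖x₁ − x₂‖; i.e., the projection onto the moving polyhedron is Lipschitz in the parameter x, uniformly in v. -/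
/-
`Ω x` is the polyhedron `{y | ∀ k, q k ≤ ⟪a k, y⟫}` whose rows `a` are the rows of `A` and the
unit vectors, with right-hand side `q = (b x, c)`; so it suffices that the projection of `v` onto
such a polyhedron is Lipschitz in `q`, uniformly in `v`.

Join `q₁` to `q₂` by a segment and let `p t` be the projection for the right-hand side at `t`.
`p` is continuous: its cluster points at `t₀` lie in the limit polyhedron (the graph is closed)
and are no farther from `v` than `p t₀` (the polyhedra depend convexly on `t`). The residual
`v - p t` lies in the span of the active rows, so `[0, 1]` is covered by finitely many closed
pieces, one for each set `S` of rows, on which `v - p t ∈ span (a '' S)` and `⟪a i, p t⟫ = q t i`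
for `i ∈ S`. On such a piece `p s - p t` lies in `span (a '' S)` and its inner products with these
rows are at most `|s - t| * ‖q₁ - q₂‖`, which bounds its norm by a constant depending only on `S`.
Lipschitz bounds on the pieces of a finite closed cover of an interval give one on the interval.
-/

open scoped RealInnerProductSpace
open Set Filter Topology Submodule AffineMap

section Interval

variable {E : Type*} [NormedAddCommGroup E]

theorem norm_sub_le_of_isClosed_cover {κ : Type*} [Finite κ] {f : ℝ → E} {a b L : ℝ}
    (hab : a ≤ b) (hf : ContinuousOn f (Icc a b)) {T : κ → Set ℝ} (hT : ∀ k, IsClosed (T k))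
    (hcover : Icc a b ⊆ ⋃ k, T k) (hlip : ∀ k, ∀ s ∈ T k, ∀ t ∈ T k, ‖f s - f t‖ ≤ L * |s - t|) :
    ‖f b - f a‖ ≤ L * (b - a) := by
  have hlocal : ∀ t₀ ∈ Icc a b, ∀ᶠ t in 𝓝 t₀, t ∈ Icc a b → ‖f t - f t₀‖ ≤ L * |t - t₀| := by
    intro t₀ ht₀
    have hfar : IsClosed (⋃ k ∈ {k | t₀ ∉ T k}, T k) :=
      (toFinite _).isClosed_biUnion fun k _ ↦ hT k
    filter_upwards [hfar.isOpen_compl.mem_nhds (by simp)] with t ht htI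
    obtain ⟨k, hk⟩ := mem_iUnion.mp (hcover htI)
    have ht₀k : t₀ ∈ T k := by
      by_contra h
      exact ht (mem_biUnion h hk)
    exact hlip k t hk t₀ ht₀k
  set s := {t | ‖f t - f a‖ ≤ L * (t - a)}
  have hs : IsClosed (s ∩ Icc a b) := by
    rw [inter_comm]
    exact isClosed_Icc.isClosed_le ((hf.sub continuousOn_const).norm)
      (continuousOn_const.mul (continuousOn_id.sub continuousOn_const))
  refine hs.Icc_subset_of_forall_mem_nhdsWithin (by simp [s]) ?_ ⟨hab, le_rfl⟩
  rintro x ⟨hxs, hxI⟩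
  filter_upwards [Ioo_mem_nhdsGT hxI.2, nhdsWithin_le_nhds (hlocal x (Ico_subset_Icc_self hxI))]
    with t ⟨hxt, htb⟩ hlip
  have htI : t ∈ Icc a b := ⟨hxI.1.trans hxt.le, htb.le⟩
  calc ‖f t - f a‖ ≤ ‖f t - f x‖ + ‖f x - f a‖ := norm_sub_le_norm_sub_add_norm_sub _ _ _
    _ ≤ L * |t - x| + L * (x - a) := add_le_add (hlip htI) hxs
    _ = L * (t - a) := by rw [abs_of_pos (sub_pos.mpr hxt)]; ring

end Interval

theorem lineMap_lineMap_lineMap {F : Type*} [AddCommGroup F] [Module ℝ F] (q₁ q₂ : F)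
    {t₀ e t σ : ℝ} (h : σ * (e - t₀) = t - t₀) :
    lineMap (lineMap q₁ q₂ t₀) (lineMap q₁ q₂ e) σ = lineMap q₁ q₂ t := by
  simp only [lineMap_apply_module]
  linear_combination (norm := module) h • (q₂ - q₁)

theorem exists_continuous_selection_lineMap {F E : Type*} [AddCommGroup F] [Module ℝ F]
    [NormedAddCommGroup E] [NormedSpace ℝ E] {G : Set (F × E)} (hG : Convex ℝ G)
    {q₁ q₂ : F} {y₁ y₂ w : E} {t₀ : ℝ} (ht₀ : t₀ ∈ Icc (0 : ℝ) 1) (h₁ : (q₁, y₁) ∈ G)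
    (h₂ : (q₂, y₂) ∈ G) (hw : (lineMap q₁ q₂ t₀, w) ∈ G) :
    ∃ w' : ℝ → E, Continuous w' ∧ w' t₀ = w ∧ ∀ t ∈ Icc (0 : ℝ) 1, (lineMap q₁ q₂ t, w' t) ∈ G := by
  -- the polygonal path through `(0, y₁)`, `(t₀, w)`, `(1, y₂)`; since `x / 0 = 0`, the formulas
  -- stay correct when `t₀ = 0` or `t₀ = 1`
  refine ⟨fun t ↦ if t ≤ t₀ then lineMap w y₁ ((t₀ - t) / t₀)
    else lineMap w y₂ ((t - t₀) / (1 - t₀)), ?_, by simp, fun t ht ↦ ?_⟩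
  · refine Continuous.if_le ?_ ?_ continuous_id continuous_const fun t ht ↦ by simp [ht]
    · exact continuous_const.lineMap continuous_const (by fun_prop)
    · exact continuous_const.lineMap continuous_const (by fun_prop)
  have key : ∀ {e : ℝ} {y : E} {σ : ℝ}, (lineMap q₁ q₂ e, y) ∈ G → σ ∈ Icc (0 : ℝ) 1 →
      σ * (e - t₀) = t - t₀ → (lineMap q₁ q₂ t, lineMap w y σ) ∈ G := by
    intro e y σ hy hσ he
    convert hG.lineMap_mem hw hy hσ using 1
    ext
    · simp [lineMap_lineMap_lineMap q₁ q₂ he]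
    · simp
  dsimp only
  split_ifs with htt₀
  · refine key (e := 0) (by simpa using h₁)
      ⟨div_nonneg (by linarith) ht₀.1, div_le_one_of_le₀ (by linarith [ht.1]) ht₀.1⟩ ?_
    have : (t₀ - t) / t₀ * t₀ = t₀ - t :=
      div_mul_cancel_of_imp fun h ↦ by linarith [ht.1]
    linarith
  · have h1t₀ : 0 < 1 - t₀ := by linarith [ht.2]
    refine key (e := 1) (by simpa using h₂)
      ⟨div_nonneg (by linarith) h1t₀.le, div_le_one_of_le₀ (by linarith [ht.2]) h1t₀.le⟩ ?_
    field_simp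

section MetricProjection

variable {E : Type*} [NormedAddCommGroup E] [InnerProductSpace ℝ E]

def IsMetricProj (K : Set E) (v p : E) : Prop :=
  p ∈ K ∧ ∀ w ∈ K, ⟪v - p, w - p⟫ ≤ 0

namespace IsMetricProj

variable {K : Set E} {v p w : E}

theorem norm_sq_add_norm_sq_le (h : IsMetricProj K v p) (hw : w ∈ K) :
    ‖v - p‖ ^ 2 + ‖w - p‖ ^ 2 ≤ ‖v - w‖ ^ 2 := by
  have hvw : v - w = (v - p) - (w - p) := by abel
  rw [hvw, norm_sub_sq_real (v - p) (w - p)]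
  linarith [h.2 w hw]

theorem norm_le (h : IsMetricProj K v p) (hw : w ∈ K) : ‖v - p‖ ≤ ‖v - w‖ := by
  refine (pow_le_pow_iff_left₀ (norm_nonneg _) (norm_nonneg _) two_ne_zero).mp ?_
  linarith [h.norm_sq_add_norm_sq_le hw, sq_nonneg ‖w - p‖]

theorem eq_of_norm_le (h : IsMetricProj K v p) (hw : w ∈ K) (hle : ‖v - w‖ ≤ ‖v - p‖) :
    w = p := by
  have hsq : ‖v - w‖ ^ 2 ≤ ‖v - p‖ ^ 2 := pow_le_pow_left₀ (norm_nonneg _) hle 2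
  have : ‖w - p‖ ^ 2 ≤ 0 := by linarith [h.norm_sq_add_norm_sq_le hw]
  exact sub_eq_zero.mp (norm_eq_zero.mp ((sq_nonpos_iff _).mp this))

theorem unique {p' : E} (h : IsMetricProj K v p) (h' : IsMetricProj K v p') : p' = p :=
  h.eq_of_norm_le h'.1 (h'.norm_le h.1)

end IsMetricProj

theorem exists_isMetricProj [CompleteSpace E] {K : Set E} (hne : K.Nonempty) (hK : IsClosed K)
    (hKc : Convex ℝ K) (v : E) : ∃ p, IsMetricProj K v p := by
  obtain ⟨p, hp, hmin⟩ := exists_norm_eq_iInf_of_complete_convex hne hK.isComplete hKc v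
  exact ⟨p, hp, (norm_eq_iInf_iff_real_inner_le_zero hKc hp).mp hmin⟩

theorem continuousOn_of_isMetricProj_fiber_lineMap {F : Type*} [NormedAddCommGroup F]
    [NormedSpace ℝ F] [FiniteDimensional ℝ E] {G : Set (F × E)} (hGc : IsClosed G)
    (hG : Convex ℝ G) {q₁ q₂ : F} {v : E} {p : ℝ → E}
    (hp : ∀ t ∈ Icc (0 : ℝ) 1, IsMetricProj {y | (lineMap q₁ q₂ t, y) ∈ G} v (p t)) :
    ContinuousOn p (Icc 0 1) := by
  intro t₀ ht₀
  obtain ⟨w, hwc, hwt₀, hwG⟩ := exists_continuous_selection_lineMap hG ht₀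
    (by simpa using (hp 0 (left_mem_Icc.mpr zero_le_one)).1)
    (by simpa using (hp 1 (right_mem_Icc.mpr zero_le_one)).1) (hp t₀ ht₀).1
  have hw : Tendsto w (𝓝[Icc 0 1] t₀) (𝓝 (p t₀)) :=
    hwt₀ ▸ (hwc.tendsto t₀).mono_left nhdsWithin_le_nhds
  have hle : ∀ᶠ t in 𝓝[Icc 0 1] t₀, ‖v - p t‖ ≤ ‖v - w t‖ :=
    eventually_nhdsWithin_of_forall fun t ht ↦ (hp t ht).norm_le (hwG t ht)
  have hpG : ∀ᶠ t in 𝓝[Icc 0 1] t₀, (lineMap q₁ q₂ t, p t) ∈ G :=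
    eventually_nhdsWithin_of_forall fun t ht ↦ (hp t ht).1
  have hball : ∀ᶠ t in 𝓝[Icc 0 1] t₀, p t ∈ Metric.closedBall v (‖v - p t₀‖ + 1) := by
    filter_upwards [hle, (tendsto_order.1 (hw.const_sub v).norm).2 _ (lt_add_one _)]
      with t ht htw
    rw [Metric.mem_closedBall, dist_eq_norm']
    linarith
  refine (isCompact_closedBall v _).tendsto_nhds_of_unique_mapClusterPt hball fun z _ hz ↦ ?_
  obtain ⟨U, hUl, hUz⟩ := mapClusterPt_iff_ultrafilter.mp hz
  have hQ : Tendsto (lineMap q₁ q₂) U (𝓝 (lineMap q₁ q₂ t₀)) :=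
    ((lineMap_continuous.tendsto t₀).mono_left nhdsWithin_le_nhds).mono_left hUl
  have hzG : (lineMap q₁ q₂ t₀, z) ∈ G := hGc.mem_of_tendsto (hQ.prodMk_nhds hUz) (hUl hpG)
  have hzle : ‖v - z‖ ≤ ‖v - p t₀‖ :=
    le_of_tendsto_of_tendsto (hUz.const_sub v).norm ((hw.mono_left hUl).const_sub v).norm (hUl hle)
  exact (hp t₀ ht₀).eq_of_norm_le hzG hzle

end MetricProjection

section Polyhedron

variable {E : Type*} [NormedAddCommGroup E] [InnerProductSpace ℝ E] {ι : Type*}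

def polyhedron (a : ι → E) (q : ι → ℝ) : Set E := {y | ∀ i, q i ≤ ⟪a i, y⟫}

theorem isClosed_polyhedron_graph (a : ι → E) :
    IsClosed {x : (ι → ℝ) × E | x.2 ∈ polyhedron a x.1} := by
  change IsClosed {x : (ι → ℝ) × E | ∀ i, x.1 i ≤ ⟪a i, x.2⟫}
  simp only [ofPred_forall]
  exact isClosed_iInter fun i ↦ isClosed_le (by fun_prop) (by fun_prop)

theorem convex_polyhedron_graph (a : ι → E) :
    Convex ℝ {x : (ι → ℝ) × E | x.2 ∈ polyhedron a x.1} := by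
  intro x hx y hy s t hs ht _ i
  simp only [Prod.fst_add, Prod.snd_add, Prod.smul_fst, Prod.smul_snd, Pi.add_apply,
    Pi.smul_apply, smul_eq_mul, inner_add_right, real_inner_smul_right]
  exact add_le_add (mul_le_mul_of_nonneg_left (hx i) hs) (mul_le_mul_of_nonneg_left (hy i) ht)

theorem lineMap_mem_polyhedron {a : ι → E} {q₁ q₂ : ι → ℝ} {y₁ y₂ : E} {t : ℝ}
    (h₁ : y₁ ∈ polyhedron a q₁) (h₂ : y₂ ∈ polyhedron a q₂) (ht : t ∈ Icc (0 : ℝ) 1) :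
    lineMap y₁ y₂ t ∈ polyhedron a (lineMap q₁ q₂ t) := by
  have := (convex_polyhedron_graph a).lineMap_mem (x := (q₁, y₁)) (y := (q₂, y₂)) h₁ h₂ ht
  change (lineMap (q₁, y₁) (q₂, y₂) t).2 ∈ polyhedron a (lineMap (q₁, y₁) (q₂, y₂) t).1 at this
  rwa [fst_lineMap, snd_lineMap] at this

theorem isClosed_polyhedron (a : ι → E) (q : ι → ℝ) : IsClosed (polyhedron a q) :=
  (isClosed_polyhedron_graph a).preimage (continuous_const.prodMk continuous_id)

theorem convex_polyhedron (a : ι → E) (q : ι → ℝ) : Convex ℝ (polyhedron a q) := by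
  simpa using (convex_polyhedron_graph a).affine_preimage
    ((AffineMap.const ℝ E q).prod (AffineMap.id ℝ E))

theorem exists_norm_le_of_mem_span [Finite ι] [FiniteDimensional ℝ E] (a : ι → E) (S : Set ι) :
    ∃ C, 0 ≤ C ∧ ∀ z ∈ span ℝ (a '' S), ∀ δ, 0 ≤ δ → (∀ i ∈ S, |⟪a i, z⟫| ≤ δ) → ‖z‖ ≤ C * δ := by
  have := Fintype.ofFinite S
  set V := span ℝ (a '' S)
  let φ : V →ₗ[ℝ] (S → ℝ) := LinearMap.pi fun i ↦ (innerSL ℝ (a i)).toLinearMap ∘ₗ V.subtype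
  have hφ : LinearMap.ker φ = ⊥ := by
    refine LinearMap.ker_eq_bot'.mpr fun z hz ↦ Subtype.ext ?_
    have hVz : V ≤ (ℝ ∙ (z : E))ᗮ := by
      refine span_le.mpr ?_
      rintro _ ⟨i, hi, rfl⟩
      rw [SetLike.mem_coe, mem_orthogonal_singleton_iff_inner_right, real_inner_comm]
      exact congrFun hz ⟨i, hi⟩
    simpa using mem_orthogonal_singleton_iff_inner_right.mp (hVz z.2)
  obtain ⟨C, -, hC⟩ := φ.exists_antilipschitzWith hφ
  refine ⟨C, C.coe_nonneg, fun z hz δ hδ hzδ ↦ ?_⟩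
  calc ‖z‖ = ‖(⟨z, hz⟩ : V)‖ := rfl
    _ ≤ C * ‖φ ⟨z, hz⟩‖ := by simpa using hC.le_mul_dist ⟨z, hz⟩ 0
    _ ≤ C * δ := by
      gcongr
      exact (pi_norm_le_iff_of_nonneg hδ).mpr fun i ↦ hzδ i i.2

theorem IsMetricProj.sub_mem_span_polyhedron [Finite ι] [FiniteDimensional ℝ E] {a : ι → E}
    {q : ι → ℝ} {v p : E} (h : IsMetricProj (polyhedron a q) v p) :
    v - p ∈ span ℝ (a '' {i | ⟪a i, p⟫ = q i}) := by
  rw [← orthogonal_orthogonal (span ℝ _), mem_orthogonal]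
  intro d hd
  have hactive : ∀ i, ⟪a i, p⟫ = q i → ⟪a i, d⟫ = 0 := fun i hi ↦
    inner_right_of_mem_orthogonal (subset_span (mem_image_of_mem a hi)) hd
  have hfeas : ∀ᶠ σ in 𝓝 (0 : ℝ), p + σ • d ∈ polyhedron a q := by
    refine eventually_all.mpr fun i ↦ ?_
    rcases (h.1 i).eq_or_lt with hi | hi
    · refine Eventually.of_forall fun σ ↦ ?_
      rw [inner_add_right, real_inner_smul_right, hactive i hi.symm, ← hi]
      simp
    · have hcont : Continuous fun σ : ℝ ↦ ⟪a i, p + σ • d⟫ := by fun_prop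
      exact hcont.continuousAt.eventually (lt_mem_nhds (by simpa using hi)) |>.mono fun _ ↦ le_of_lt
  have hmax : IsLocalMax (fun σ : ℝ ↦ σ * ⟪v - p, d⟫) 0 :=
    hfeas.mono fun σ hσ ↦ by simpa [real_inner_smul_right, mul_comm] using h.2 _ hσ
  rw [real_inner_comm]
  exact hmax.hasDerivAt_eq_zero (by simpa using (hasDerivAt_id (0 : ℝ)).mul_const ⟪v - p, d⟫)

theorem norm_sub_le_of_isMetricProj_lineMap [Fintype ι] [FiniteDimensional ℝ E] {a : ι → E}
    {K : ℝ} (hK : ∀ S : Set ι, ∀ z ∈ span ℝ (a '' S), ∀ δ, 0 ≤ δ →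
      (∀ i ∈ S, |⟪a i, z⟫| ≤ δ) → ‖z‖ ≤ K * δ)
    {q₁ q₂ : ι → ℝ} {v : E} {p : ℝ → E}
    (hp : ∀ t ∈ Icc (0 : ℝ) 1, IsMetricProj (polyhedron a (lineMap q₁ q₂ t)) v (p t)) :
    ‖p 1 - p 0‖ ≤ K * ‖q₁ - q₂‖ := by
  have hcont : ContinuousOn p (Icc 0 1) :=
    continuousOn_of_isMetricProj_fiber_lineMap (isClosed_polyhedron_graph a)
      (convex_polyhedron_graph a) hp
  let T (S : Set ι) : Set ℝ := {t ∈ Icc 0 1 | v - p t ∈ span ℝ (a '' S)} ∩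
    ⋂ i ∈ S, {t ∈ Icc 0 1 | ⟪a i, p t⟫ = lineMap q₁ q₂ t i}
  have hT : ∀ S, IsClosed (T S) := fun S ↦
    ((continuousOn_const.sub hcont).preimage_isClosed_of_isClosed isClosed_Icc
      (closed_of_finiteDimensional _)).inter <| isClosed_biInter fun i _ ↦
        isClosed_Icc.isClosed_eq (continuousOn_const.inner hcont)
          ((continuous_apply i).comp (lineMap_continuous (p := q₁) (q := q₂))).continuousOn
  have hcover : Icc 0 1 ⊆ ⋃ S, T S := fun t ht ↦ mem_iUnion.mpr
    ⟨{i | ⟪a i, p t⟫ = lineMap q₁ q₂ t i}, ⟨ht, (hp t ht).sub_mem_span_polyhedron⟩,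
      mem_iInter₂.mpr fun i hi ↦ ⟨ht, hi⟩⟩
  have hlip : ∀ S, ∀ s ∈ T S, ∀ t ∈ T S, ‖p s - p t‖ ≤ K * ‖q₁ - q₂‖ * |s - t| := by
    rintro S s ⟨⟨-, hs⟩, hsS⟩ t ⟨⟨-, ht⟩, htS⟩
    have hspan : p s - p t ∈ span ℝ (a '' S) := by
      convert sub_mem ht hs using 1; abel
    have hinner : ∀ i ∈ S, |⟪a i, p s - p t⟫| ≤ ‖q₁ - q₂‖ * |s - t| := fun i hi ↦ by
      rw [inner_sub_right, (mem_iInter₂.mp hsS i hi).2, (mem_iInter₂.mp htS i hi).2]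
      have : lineMap q₁ q₂ s i - lineMap q₁ q₂ t i = (q₁ i - q₂ i) * (t - s) := by
        simp only [lineMap_apply_module, Pi.add_apply, Pi.smul_apply, smul_eq_mul]; ring
      rw [this, abs_mul, abs_sub_comm t]
      gcongr
      exact norm_le_pi_norm (q₁ - q₂) i
    rw [mul_assoc]
    exact hK S _ hspan _ (by positivity) hinner
  simpa using norm_sub_le_of_isClosed_cover zero_le_one hcont hT hcover hlip

theorem exists_lipschitz_isMetricProj_polyhedron [Fintype ι] [FiniteDimensional ℝ E]
    (a : ι → E) : ∃ K, 0 ≤ K ∧ ∀ (q₁ q₂ : ι → ℝ) (v p₁ p₂ : E),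
      IsMetricProj (polyhedron a q₁) v p₁ → IsMetricProj (polyhedron a q₂) v p₂ →
      ‖p₁ - p₂‖ ≤ K * ‖q₁ - q₂‖ := by
  choose C hC₀ hC using exists_norm_le_of_mem_span a
  obtain ⟨K, hK⟩ := Finite.exists_le C
  have hCK : ∀ S : Set ι, ∀ z ∈ span ℝ (a '' S), ∀ δ, 0 ≤ δ →
      (∀ i ∈ S, |⟪a i, z⟫| ≤ δ) → ‖z‖ ≤ K * δ := fun S z hz δ hδ hzδ ↦
    (hC S z hz δ hδ hzδ).trans (mul_le_mul_of_nonneg_right (hK S) hδ)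
  refine ⟨K, (hC₀ ∅).trans (hK ∅), fun q₁ q₂ v p₁ p₂ h₁ h₂ ↦ ?_⟩
  have hex : ∀ t ∈ Icc (0 : ℝ) 1, ∃ p, IsMetricProj (polyhedron a (lineMap q₁ q₂ t)) v p :=
    fun t ht ↦ exists_isMetricProj ⟨_, lineMap_mem_polyhedron h₁.1 h₂.1 ht⟩
      (isClosed_polyhedron a _) (convex_polyhedron a _) v
  choose! p hp using hex
  have hp₀ : p 0 = p₁ := h₁.unique (by simpa using hp 0 (left_mem_Icc.mpr zero_le_one))
  have hp₁ : p 1 = p₂ := h₂.unique (by simpa using hp 1 (right_mem_Icc.mpr zero_le_one))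
  rw [norm_sub_rev, ← hp₀, ← hp₁]
  exact norm_sub_le_of_isMetricProj_lineMap hCK hp

end Polyhedron

theorem setOf_le_matrix_and_le_eq_polyhedron {κ ν : Type*} [Fintype ν] [DecidableEq ν]
    (A : Matrix κ ν ℝ) (β : κ → ℝ) (c : ν → ℝ) :
    {y : EuclideanSpace ℝ ν | (∀ i, β i ≤ ∑ j, A i j * y j) ∧ ∀ j, c j ≤ y j} =
      polyhedron (Sum.elim (fun i ↦ WithLp.toLp 2 (A i)) fun j ↦ EuclideanSpace.single j 1)
        (Sum.elim β c) := by
  ext y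
  simp [polyhedron, Sum.forall, PiLp.inner_apply, mul_comm]

theorem norm_sumElim_sub_sumElim_le {κ ν : Type*} [Fintype κ] [Fintype ν]
    (u₁ u₂ : EuclideanSpace ℝ κ) (c : ν → ℝ) :
    ‖Sum.elim (⇑u₁) c - Sum.elim (⇑u₂) c‖ ≤ ‖u₁ - u₂‖ := by
  refine (pi_norm_le_iff_of_nonneg (norm_nonneg _)).mpr ?_
  rintro (i | j)
  · simpa using PiLp.norm_apply_le (u₁ - u₂) i
  · simp

theorem stmt_18_general {m n r : ℕ}
    (A : Matrix (Fin r) (Fin n) ℝ) (c : EuclideanSpace ℝ (Fin n))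
    (X : Set (EuclideanSpace ℝ (Fin m)))
    (b : EuclideanSpace ℝ (Fin m) → EuclideanSpace ℝ (Fin r))
    (Lb : ℝ) (hLb : 0 ≤ Lb)
    (hb : ∀ x₁ ∈ X, ∀ x₂ ∈ X, ‖b x₁ - b x₂‖ ≤ Lb * ‖x₁ - x₂‖)
    (Ω : EuclideanSpace ℝ (Fin m) → Set (EuclideanSpace ℝ (Fin n)))
    (hΩ : ∀ x, Ω x = {y : EuclideanSpace ℝ (Fin n) |
      (∀ i : Fin r, b x i ≤ ∑ j : Fin n, A i j * y j) ∧ (∀ j : Fin n, c j ≤ y j)})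
    (P : EuclideanSpace ℝ (Fin m) → EuclideanSpace ℝ (Fin n) → EuclideanSpace ℝ (Fin n))
    (hP : ∀ x ∈ X, ∀ v : EuclideanSpace ℝ (Fin n),
      P x v ∈ Ω x ∧ ∀ w ∈ Ω x, ⟪v - P x v, w - P x v⟫ ≤ 0) :
    ∃ L' : ℝ, 0 ≤ L' ∧ ∀ v : EuclideanSpace ℝ (Fin n), ∀ x₁ ∈ X, ∀ x₂ ∈ X,
      ‖P x₁ v - P x₂ v‖ ≤ L' * ‖x₁ - x₂‖ := by
  set a : Fin r ⊕ Fin n → EuclideanSpace ℝ (Fin n) :=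
    Sum.elim (fun i ↦ WithLp.toLp 2 (A i)) fun j ↦ EuclideanSpace.single j 1
  let q (x : EuclideanSpace ℝ (Fin m)) : Fin r ⊕ Fin n → ℝ := Sum.elim (⇑(b x)) ⇑c
  have hPa : ∀ x ∈ X, ∀ v, IsMetricProj (polyhedron a (q x)) v (P x v) := fun x hx v ↦
    (hΩ x).trans (setOf_le_matrix_and_le_eq_polyhedron A _ _) ▸ hP x hx v
  obtain ⟨K, hK₀, hK⟩ := exists_lipschitz_isMetricProj_polyhedron a
  refine ⟨K * Lb, mul_nonneg hK₀ hLb, fun v x₁ hx₁ x₂ hx₂ ↦ ?_⟩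
  calc ‖P x₁ v - P x₂ v‖ ≤ K * ‖q x₁ - q x₂‖ := hK _ _ _ _ _ (hPa x₁ hx₁ v) (hPa x₂ hx₂ v)
    _ ≤ K * (Lb * ‖x₁ - x₂‖) := by
      gcongr
      exact (norm_sumElim_sub_sumElim_le _ _ _).trans (hb x₁ hx₁ x₂ hx₂)
    _ = K * Lb * ‖x₁ - x₂‖ := by ring

/-- Lipschitz continuity in the parameter of the metric projection onto the moving
polyhedron `Ω(x) = {y : A y ≥ b(x), y ≥ c}`, where `b` is Lipschitz on `X`. -/
theorem stmt_18 {m n r : ℕ}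
    (A : Matrix (Fin r) (Fin n) ℝ) (c : EuclideanSpace ℝ (Fin n))
    (X : Set (EuclideanSpace ℝ (Fin m)))
    (b : EuclideanSpace ℝ (Fin m) → EuclideanSpace ℝ (Fin r))
    (Lb : ℝ) (hLb : 0 ≤ Lb)
    (hb : ∀ x₁ ∈ X, ∀ x₂ ∈ X, ‖b x₁ - b x₂‖ ≤ Lb * ‖x₁ - x₂‖)
    (Ω : EuclideanSpace ℝ (Fin m) → Set (EuclideanSpace ℝ (Fin n)))
    (hΩ : ∀ x, Ω x = {y : EuclideanSpace ℝ (Fin n) |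
      (∀ i : Fin r, b x i ≤ ∑ j : Fin n, A i j * y j) ∧ (∀ j : Fin n, c j ≤ y j)})
    (hne : ∀ x ∈ X, (Ω x).Nonempty)
    (P : EuclideanSpace ℝ (Fin m) → EuclideanSpace ℝ (Fin n) → EuclideanSpace ℝ (Fin n))
    (hP : ∀ x ∈ X, ∀ v : EuclideanSpace ℝ (Fin n),
      P x v ∈ Ω x ∧ ∀ w ∈ Ω x, ⟪v - P x v, w - P x v⟫ ≤ 0) :
    ∃ L' : ℝ, 0 ≤ L' ∧ ∀ v : EuclideanSpace ℝ (Fin n), ∀ x₁ ∈ X, ∀ x₂ ∈ X,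
      ‖P x₁ v - P x₂ v‖ ≤ L' * ‖x₁ - x₂‖ :=
  stmt_18_general A c X b Lb hLb hb Ω hΩ P hP
end
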